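/- Fix x ∈ Λ and E ∉ σ(Ĥ_x) ∪ {Ω}, where Ĥ_x is obtained from H_Λ by replacing ρ(x) with a value ρ̂_x. If E ∈ σ(H_Λ) with eigenprojection matrix elements φ_E(·,x), then for all y ∈ Λ: φ_E(y,x) = ((g²ρ̂_x - g²ρ(x))/(E-Ω)) · Ĝ(y,x,E) · φ_E(x,x), where Ĝ(y,x,E) = ⟨δ_y, (K̂_x(E) - E)^{-1} δ_x⟩ and K̂_x(E) = T_Λ + (g²/(E-Ω))ρ + ((g²ρ̂_x - g²ρ(x))/(E-Ω)) |δ_x⟩⟨δ_x|. -/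

import Mathlib

noncomputable section

variable (d : ℕ)

/-- The finite-volume photon–atom Hamiltonian as a matrix on `ℓ²(Λ;ℝ²)`:
`H_Λ(φ,ψ) = (T_Λφ + g√ρ ψ, g√ρ φ + Ωψ)`. -/
def hamMat (Λ : Finset (Fin d → ℤ)) (T : (Fin d → ℤ) → (Fin d → ℤ) → ℝ)
    (ρ : (Fin d → ℤ) → ℝ) (g Ω : ℝ) :
    Matrix ({a // a ∈ Λ} × Fin 2) ({a // a ∈ Λ} × Fin 2) ℝ :=
  Matrix.of fun p q =>
    if p.2 = 0 then
      (if q.2 = 0 then T p.1 q.1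
       else if p.1 = q.1 then g * Real.sqrt (ρ p.1) else 0)
    else
      (if q.2 = 0 then (if p.1 = q.1 then g * Real.sqrt (ρ p.1) else 0)
       else if p.1 = q.1 then Ω else 0)

/-- The orthogonal projection onto the `E`-eigenspace of `H_Λ`, as an operator. -/
def eigProj (Λ : Finset (Fin d → ℤ)) (T : (Fin d → ℤ) → (Fin d → ℤ) → ℝ)
    (ρ : (Fin d → ℤ) → ℝ) (g Ω E : ℝ) :
    EuclideanSpace ℝ ({a // a ∈ Λ} × Fin 2) →L[ℝ]
      EuclideanSpace ℝ ({a // a ∈ Λ} × Fin 2) :=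
  letI K := Module.End.eigenspace (Matrix.toEuclideanLin (hamMat d Λ T ρ g Ω)) E
  K.subtypeL.comp (Submodule.orthogonalProjection K)

/-- `e_{j,x}` basis vectors. -/
def basE (Λ : Finset (Fin d → ℤ)) (j : Fin 2) (x : {a // a ∈ Λ}) :
    EuclideanSpace ℝ ({a // a ∈ Λ} × Fin 2) :=
  EuclideanSpace.single (x, j) 1

/-- The rank-one modification `K̂_x(E)` of the reduced operator
`K_Λ(E) = T_Λ + (g²/(E-Ω))ρ`, in which `ρ(x)` is replaced by `ρ̂`. -/
def KhatMat (Λ : Finset (Fin d → ℤ)) (T : (Fin d → ℤ) → (Fin d → ℤ) → ℝ)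
    (ρ : (Fin d → ℤ) → ℝ) (g Ω : ℝ) (x : {a // a ∈ Λ}) (ρhat E : ℝ) :
    Matrix {a // a ∈ Λ} {a // a ∈ Λ} ℝ :=
  Matrix.of fun a b =>
    T a b + if a = b then g ^ 2 / (E - Ω) * (if a = x then ρhat else ρ a) else 0

/-- The modified Green's function `Ĝ(y,x,E) = ⟨δ_y, (K̂_x(E) - E)^{-1} δ_x⟩`. -/
def Ghat (Λ : Finset (Fin d → ℤ)) (T : (Fin d → ℤ) → (Fin d → ℤ) → ℝ)
    (ρ : (Fin d → ℤ) → ℝ) (g Ω : ℝ) (x : {a // a ∈ Λ}) (ρhat E : ℝ)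
    (y x' : {a // a ∈ Λ}) : ℝ :=
  (KhatMat d Λ T ρ g Ω x ρhat E - E • (1 : Matrix {a // a ∈ Λ} {a // a ∈ Λ} ℝ))⁻¹ y x'

/-! If `ψ = (u, v)` is an `E`-eigenvector of `H_Λ`, the atomic equation `g√ρ u + Ω v = E v`
gives `v = g√ρ u / (E - Ω)` for `E ≠ Ω`, and substituting this into the photonic equation
shows `K_Λ(E) u = E u`. Since `K̂_x(E) = K_Λ(E) + c |δ_x⟩⟨δ_x|` with
`c = (g²ρ̂_x - g²ρ(x))/(E - Ω)`, this means `(K̂_x(E) - E) u = c u(x) δ_x`, and inverting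
`K̂_x(E) - E` gives `u(y) = c Ĝ(y,x,E) u(x)`. The function `φ_E(·,x)` is the photonic part of
the eigenvector obtained by projecting `δ_x` onto the eigenspace. -/

namespace Matrix

variable {n R : Type*} [Fintype n] [DecidableEq n] [CommRing R]

theorem apply_eq_inv_apply_mul_of_mulVec_eq_single {M : Matrix n n R} (hM : IsUnit M)
    {u : n → R} {x : n} {c : R} (h : M *ᵥ u = Pi.single x c) (y : n) :
    u y = M⁻¹ y x * c := by
  have hu : u = M⁻¹ *ᵥ (M *ᵥ u) := by
    rw [mulVec_mulVec, nonsing_inv_mul M ((isUnit_iff_isUnit_det M).mp hM), one_mulVec]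
  rw [hu, h, mulVec_single]
  simp

theorem apply_eq_mul_inv_apply_mul_of_mulVec_eq_smul {K : Matrix n n R} {u : n → R} {E : R}
    (hu : K *ᵥ u = E • u) {x : n} {c : R} (hinv : IsUnit (K + single x x c - E • 1)) (y : n) :
    u y = c * (K + single x x c - E • 1)⁻¹ y x * u x := by
  have hpert : (K + single x x c - E • 1) *ᵥ u = Pi.single x (c * u x) := by
    rw [sub_mulVec, add_mulVec, hu, smul_mulVec, one_mulVec, add_sub_cancel_left,
      single_mulVec_eq, ← Pi.single_smul, smul_eq_mul, mul_one]
  rw [apply_eq_inv_apply_mul_of_mulVec_eq_single hinv hpert y]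
  ring

end Matrix

-- The reduced operator `K_Λ(E) = T_Λ + (g²/(E-Ω))ρ`.
def KMat (Λ : Finset (Fin d → ℤ)) (T : (Fin d → ℤ) → (Fin d → ℤ) → ℝ)
    (ρ : (Fin d → ℤ) → ℝ) (g Ω E : ℝ) : Matrix {a // a ∈ Λ} {a // a ∈ Λ} ℝ :=
  Matrix.of fun a b => T a b + if a = b then g ^ 2 / (E - Ω) * ρ a else 0

section

variable {d} {Λ : Finset (Fin d → ℤ)} {T : (Fin d → ℤ) → (Fin d → ℤ) → ℝ}
  {ρ : (Fin d → ℤ) → ℝ} {g Ω E : ℝ}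

open Matrix

theorem KhatMat_eq_KMat_add_single (x : {a // a ∈ Λ}) (ρhat : ℝ) :
    KhatMat d Λ T ρ g Ω x ρhat E
      = KMat d Λ T ρ g Ω E + single x x ((g ^ 2 * ρhat - g ^ 2 * ρ x) / (E - Ω)) := by
  ext a b
  rcases eq_or_ne a b with rfl | hab
  · rcases eq_or_ne a x with rfl | hax
    · simp only [KhatMat, KMat, Matrix.add_apply, of_apply, single_apply_same, if_true]
      ring
    · simp [KhatMat, KMat, hax, single_apply_of_row_ne hax.symm]
  · have hx : ¬(x = a ∧ x = b) := fun h => hab (h.1.symm.trans h.2)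
    simp only [KhatMat, KMat, Matrix.add_apply, of_apply, single_apply, if_neg hab, if_neg hx,
      add_zero]

theorem KMat_mulVec_apply (w : {a // a ∈ Λ} → ℝ) (a : {a // a ∈ Λ}) :
    (KMat d Λ T ρ g Ω E *ᵥ w) a
      = ∑ b : {a // a ∈ Λ}, T a b * w b + g ^ 2 / (E - Ω) * ρ a * w a := by
  simp [KMat, mulVec, dotProduct, add_mul, Finset.sum_add_distrib, ite_mul]

theorem hamMat_mulVec_apply_zero (w : {a // a ∈ Λ} × Fin 2 → ℝ) (a : {a // a ∈ Λ}) :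
    (hamMat d Λ T ρ g Ω *ᵥ w) (a, 0)
      = ∑ b : {a // a ∈ Λ}, T a b * w (b, 0) + g * √(ρ a) * w (a, 1) := by
  simp [hamMat, mulVec, dotProduct, Fintype.sum_prod_type, Finset.sum_add_distrib, ite_mul]

theorem hamMat_mulVec_apply_one (w : {a // a ∈ Λ} × Fin 2 → ℝ) (a : {a // a ∈ Λ}) :
    (hamMat d Λ T ρ g Ω *ᵥ w) (a, 1) = g * √(ρ a) * w (a, 0) + Ω * w (a, 1) := by
  simp [hamMat, mulVec, dotProduct, Fintype.sum_prod_type, Finset.sum_add_distrib, ite_mul]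

theorem KMat_mulVec_eq_smul_of_mem_eigenspace (hρ : ∀ a, 0 ≤ ρ a) (hE : E ≠ Ω)
    {ψ : EuclideanSpace ℝ ({a // a ∈ Λ} × Fin 2)}
    (hψ : ψ ∈ Module.End.eigenspace (toEuclideanLin (hamMat d Λ T ρ g Ω)) E) :
    KMat d Λ T ρ g Ω E *ᵥ (fun a => ψ (a, 0)) = E • fun a => ψ (a, 0) := by
  have hH : ∀ p, (hamMat d Λ T ρ g Ω *ᵥ ψ.ofLp) p = E * ψ p := fun p =>
    congrFun (congrArg WithLp.ofLp (Module.End.mem_eigenspace_iff.mp hψ)) p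
  ext a
  have hphoton := hH (a, 0)
  have hatom := hH (a, 1)
  rw [hamMat_mulVec_apply_zero] at hphoton
  rw [hamMat_mulVec_apply_one] at hatom
  have hatom' : ψ (a, 1) = g * √(ρ a) * ψ (a, 0) / (E - Ω) := by
    rw [eq_div_iff (sub_ne_zero.mpr hE)]
    linear_combination -hatom
  have hsq : √(ρ a) ^ 2 = ρ a := Real.sq_sqrt (hρ a)
  rw [KMat_mulVec_apply, Pi.smul_apply, smul_eq_mul]
  rw [hatom'] at hphoton
  linear_combination hphoton - g ^ 2 * ψ (a, 0) / (E - Ω) * hsq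

theorem inner_basE (j : Fin 2) (z : {a // a ∈ Λ})
    (w : EuclideanSpace ℝ ({a // a ∈ Λ} × Fin 2)) :
    inner ℝ (basE d Λ j z) w = w (z, j) := by
  simp [basE, EuclideanSpace.inner_single_left]

end

theorem stmt14 (Λ : Finset (Fin d → ℤ)) (T : (Fin d → ℤ) → (Fin d → ℤ) → ℝ)
    (ρ : (Fin d → ℤ) → ℝ) (hρ : ∀ a, 0 ≤ ρ a)
    (g Ω E : ℝ) (hE : E ≠ Ω)
    (x : {a // a ∈ Λ}) (ρhat : ℝ)
    (hinv : IsUnit (KhatMat d Λ T ρ g Ω x ρhat E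
      - E • (1 : Matrix {a // a ∈ Λ} {a // a ∈ Λ} ℝ))) :
    let φ := fun y x' => inner (𝕜 := ℝ) (basE d Λ 0 y)
      (eigProj d Λ T ρ g Ω E (basE d Λ 0 x'))
    ∀ y : {a // a ∈ Λ},
      φ y x = (g ^ 2 * ρhat - g ^ 2 * ρ x) / (E - Ω)
        * Ghat d Λ T ρ g Ω x ρhat E y x * φ x x := by
  intro φ y
  set ψ := eigProj d Λ T ρ g Ω E (basE d Λ 0 x)
  have hψ : ψ ∈ Module.End.eigenspace (Matrix.toEuclideanLin (hamMat d Λ T ρ g Ω)) E :=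
    SetLike.coe_mem _
  rw [KhatMat_eq_KMat_add_single] at hinv
  simp only [φ, inner_basE]
  rw [Ghat, KhatMat_eq_KMat_add_single]
  exact Matrix.apply_eq_mul_inv_apply_mul_of_mulVec_eq_smul
    (KMat_mulVec_eq_smul_of_mem_eigenspace hρ hE hψ) hinv y
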